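/- Let A, R, u, v be bounded operators on a Hilbert space (more generally R : H → H, v : K → H, u : H → K bounded, K another Hilbert space), let λ be a scalar, and assume (A - λ) R = 1 and R(A - λ) ⊆ 1 on dom A, i.e., R = (A - λ)^{-1}. Assume 1 - u R v is boundedly invertible on K. Set T = R + R v (1 - u R v)^{-1} u R. Then (A - v u - λ) T = 1, i.e., T is a right inverse of A - vu - λ. -/
import Mathlib


theorem stmt8 {H K : Type*}
    [NormedAddCommGroup H] [InnerProductSpace ℂ H] [CompleteSpace H]
    [NormedAddCommGroup K] [InnerProductSpace ℂ K] [CompleteSpace K]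
    (A R : H →L[ℂ] H) (v : K →L[ℂ] H) (u : H →L[ℂ] K) (lam : ℂ)
    (hR₁ : (A - lam • 1) * R = 1) (hR₂ : R * (A - lam • 1) = 1)
    (W : K →L[ℂ] K)
    (hW₁ : (1 - u.comp (R.comp v)) * W = 1) (hW₂ : W * (1 - u.comp (R.comp v)) = 1)
    (T : H →L[ℂ] H) (hT : T = R + R.comp (v.comp (W.comp (u.comp R)))) :
    (A - v.comp u - lam • 1) * T = 1 := by
  have hB : ∀ y : H, A (R y) - lam • R y = y := by
    intro y
    have := congrArg (fun f : H →L[ℂ] H => f y) hR₁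
    simpa [ContinuousLinearMap.mul_apply, ContinuousLinearMap.sub_apply,
      ContinuousLinearMap.smul_apply] using this
  have hWp : ∀ z : K, W z - u (R (v (W z))) = z := by
    intro z
    have := congrArg (fun f : K →L[ℂ] K => f z) hW₁
    simpa [ContinuousLinearMap.mul_apply, ContinuousLinearMap.sub_apply,
      ContinuousLinearMap.comp_apply] using this
  subst hT
  ext x
  simp only [ContinuousLinearMap.mul_apply, ContinuousLinearMap.sub_apply,
    ContinuousLinearMap.add_apply, ContinuousLinearMap.comp_apply,
    ContinuousLinearMap.smul_apply, ContinuousLinearMap.one_apply, map_add, smul_add]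
  have h1 := hB x
  have h3 := hWp (u (R x))
  have h2 := hB (v (W (u (R x))))
  have h4 : v (u (R (v (W (u (R x)))))) = v (W (u (R x))) - v (u (R x)) := by
    rw [← map_sub]
    congr 1
    exact (sub_sub_cancel _ _).symm.trans (by rw [h3])
  have key : ∀ a b c d e f : H, a - c = x → d - f = e →
      a - b - c + (d - (e - b) - f) = x := by
    intro a b c d e f ha hd
    rw [← ha, ← hd]
    abel
  rw [h4]
  exact key _ _ _ _ _ _ h1 h2
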